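/- arXiv:2005.06882 — 2 statements merged into one kernel-verified Lean document; each statement's English description precedes it below -/
import Mathlib

section
/- Let k ≥ 1 be an integer and suppose u ∈ ℚ[[q]] satisfies g(k) = q^k·u. Set φ := u·S^{−k} ∈ ℚ[[q]]. Then D²(φ) + k·D(φ) = (k²/4)·(E₄ − 1)·φ. (This is the identity D²(f_{1,6k}·Δ^{−k/2}) = (k²/4)·E₄·(f_{1,6k}·Δ^{−k/2}) after factoring out q^{k/2}.) -/
open PowerSeries

noncomputable section

/-- `sigma' j n = ∑_{d ∣ n} d^j`. -/
def sigma' (j n : ℕ) : ℕ := ∑ d ∈ n.divisors, d ^ j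

/-- The Eisenstein series `E₂ = 1 − 24∑σ₁(n)qⁿ`. -/
def E2 : PowerSeries ℚ :=
  PowerSeries.mk fun n => if n = 0 then 1 else -24 * (sigma' 1 n : ℚ)

/-- The Eisenstein series `E₄ = 1 + 240∑σ₃(n)qⁿ`. -/
def E4 : PowerSeries ℚ :=
  PowerSeries.mk fun n => if n = 0 then 1 else 240 * (sigma' 3 n : ℚ)

/-- The Eisenstein series `E₆ = 1 − 504∑σ₅(n)qⁿ`. -/
def E6 : PowerSeries ℚ :=
  PowerSeries.mk fun n => if n = 0 then 1 else -504 * (sigma' 5 n : ℚ)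

/-- The discriminant `Δ = (E₄³ − E₆²)/1728`. -/
def Δ' : PowerSeries ℚ := PowerSeries.C (1/1728) * (E4 ^ 3 - E6 ^ 2)

/-- The derivation `D(f) = q·df/dq`. -/
def Dq {R : Type*} [Semiring R] (f : PowerSeries R) : PowerSeries R :=
  PowerSeries.mk fun n => (n : R) * PowerSeries.coeff n f

/-- `μ_0 = −1` and `μ_k = 12(6k+1)(6k+5)/(k(k+1))` for `k ≥ 1`. -/
def μ (k : ℕ) : ℚ :=
  if k = 0 then -1 else 12 * (6*(k:ℚ)+1) * (6*(k:ℚ)+5) / ((k:ℚ)*((k:ℚ)+1))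

/-- `μ*_0 = −1` and `μ*_k = 12(6k−1)(6k+7)/(k(k+1))` for `k ≥ 1`. -/
def μs (k : ℕ) : ℚ :=
  if k = 0 then -1 else 12 * (6*(k:ℚ)-1) * (6*(k:ℚ)+7) / ((k:ℚ)*((k:ℚ)+1))

/-- `g k` is the q-expansion of the Kaneko–Koike extremal quasimodular form `f_{1,6k}`:
`g 0 = 1`, `g 1 = D(E₄)/240`, `g (k+2) = E₆·g(k+1) + μ_k·Δ·g(k)`. -/
def g : ℕ → PowerSeries ℚ
  | 0 => 1
  | 1 => PowerSeries.C (1/240) * Dq E4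
  | (k+2) => E6 * g (k+1) + PowerSeries.C (μ k) * (Δ' * g k)

/-- `h k` is the q-expansion of the extremal quasimodular form `f_{1,6k+2}`:
`h 0 = E₂`, `h 1 = −D(E₆)/504`, `h (k+2) = E₆·h(k+1) + μ*_k·Δ·h(k)`. -/
def h : ℕ → PowerSeries ℚ
  | 0 => E2
  | 1 => PowerSeries.C (-(1/504)) * Dq E6
  | (k+2) => E6 * h (k+1) + PowerSeries.C (μs k) * (Δ' * h k)

end

/-!
Put `W = (q S)^k`, so that `g k = W φ` and `W² = (q Δ)^k`. Since `D Δ = E₂ Δ`, this gives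
`2 D W = k (1 + E₂) W`, and conjugating by `W` turns the second-order equation
`2 D² f − 2k E₂ D f + k (6k − 1) (D E₂) f = 0` satisfied by `f = g k` into the stated equation
for `φ`; the leftover terms cancel by Ramanujan's `12 D E₂ = E₂² − E₄`.

The equation for `g k` is proved by two-step induction along the recurrence defining `g`,
simultaneously with the first-order relation
`4 E₄ D g(k+1) − (6k + 5) (D E₄) g(k+1) + 4 (k + 1) μ_k Δ g(k) = 0`. Both steps only use
Ramanujan's identities for `D E₂`, `D E₄`, `D E₆`. On coefficients these are convolution identities
for divisor sums, obtained by Liouville's elementary method: a sum over all representations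
`n = a x + b y` in positive integers is evaluated in two ways.
-/

open Finset

section QDerivation

variable {R : Type*}

section Semiring

variable [Semiring R]

@[simp] lemma coeff_Dq (f : R⟦X⟧) (n : ℕ) : coeff n (Dq f) = n * coeff n f := by
  simp [Dq]

lemma constantCoeff_Dq (f : R⟦X⟧) : constantCoeff (Dq f) = 0 := by
  rw [← coeff_zero_eq_constantCoeff_apply, coeff_Dq, Nat.cast_zero, zero_mul]

lemma coeff_ofNat_mul (n k : ℕ) [k.AtLeastTwo] (f : R⟦X⟧) :
    coeff n ((no_index (OfNat.ofNat k)) * f) = OfNat.ofNat k * coeff n f := by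
  rw [← map_ofNat C, coeff_C_mul]

end Semiring

section CommSemiring

variable [CommSemiring R]

variable (R) in
noncomputable def qDerivation : Derivation R R⟦X⟧ R⟦X⟧ :=
  (X : R⟦X⟧) • derivative R

lemma qDerivation_apply (f : R⟦X⟧) : qDerivation R f = Dq f := by
  ext (_ | n)
  · simp [qDerivation]
  · simp [qDerivation, coeff_succ_X_mul, coeff_derivative, mul_comm]

lemma Dq_zero : Dq (0 : R⟦X⟧) = 0 := by
  simp only [← qDerivation_apply, map_zero]

lemma Dq_add (f g : R⟦X⟧) : Dq (f + g) = Dq f + Dq g := by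
  simp only [← qDerivation_apply, map_add]

lemma Dq_mul (f g : R⟦X⟧) : Dq (f * g) = Dq f * g + f * Dq g := by
  simp only [← qDerivation_apply, Derivation.leibniz, smul_eq_mul]
  ring

lemma Dq_C (c : R) : Dq (C c) = 0 := by
  simpa [← qDerivation_apply] using (qDerivation R).map_algebraMap c

lemma Dq_natCast (n : ℕ) : Dq (n : R⟦X⟧) = 0 := by
  rw [← map_natCast (C (R := R)), Dq_C]

lemma Dq_ofNat (n : ℕ) [n.AtLeastTwo] : Dq (no_index (OfNat.ofNat n : R⟦X⟧)) = 0 :=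
  Dq_natCast n

lemma Dq_one : Dq (1 : R⟦X⟧) = 0 := by
  simpa using Dq_C (1 : R)

lemma Dq_pow (f : R⟦X⟧) (n : ℕ) : Dq (f ^ n) = n * f ^ (n - 1) * Dq f := by
  simp only [← qDerivation_apply, Derivation.leibniz_pow, smul_eq_mul, nsmul_eq_mul, mul_assoc]

lemma Dq_pow_of_Dq_eq {f b : R⟦X⟧} (h : Dq f = b * f) (n : ℕ) :
    Dq (f ^ n) = n * b * f ^ n := by
  induction n with
  | zero => simp [Dq_one]
  | succ n ih => rw [pow_succ, Dq_mul, ih, h]; push_cast; ring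

lemma Dq_X : Dq (X : R⟦X⟧) = X := by
  simp [← qDerivation_apply, qDerivation]

end CommSemiring

lemma Dq_sub [CommRing R] (f g : R⟦X⟧) : Dq (f - g) = Dq f - Dq g := by
  simp only [← qDerivation_apply, map_sub]

lemma two_mul_Dq_of_sq_eq [CommRing R] [IsDomain R] {W V b : R⟦X⟧} (hW : W ≠ 0)
    (hV : W ^ 2 = V) (hDV : Dq V = b * V) : 2 * Dq W = b * W := by
  subst hV
  rw [Dq_pow] at hDV
  refine mul_left_cancel₀ hW ?_
  push_cast at hDV
  linear_combination hDV

end QDerivation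

section Liouville

def twoProductReps (n : ℕ) : Finset ((ℕ × ℕ) × (ℕ × ℕ)) :=
  ((Icc 1 n ×ˢ Icc 1 n) ×ˢ (Icc 1 n ×ˢ Icc 1 n)).filter
    fun p => p.1.1 * p.1.2 + p.2.1 * p.2.2 = n

lemma mem_twoProductReps {n a x b y : ℕ} :
    ((a, x), (b, y)) ∈ twoProductReps n ↔
      0 < a ∧ 0 < x ∧ 0 < b ∧ 0 < y ∧ a * x + b * y = n := by
  simp only [twoProductReps, mem_filter, mem_product, mem_Icc]
  constructor
  · rintro ⟨⟨⟨⟨ha, -⟩, hx, -⟩, ⟨hb, -⟩, hy, -⟩, rfl⟩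
    omega
  · rintro ⟨ha, hx, hb, hy, rfl⟩
    have := Nat.le_mul_of_pos_right a hx
    have := Nat.le_mul_of_pos_left x ha
    have := Nat.le_mul_of_pos_right b hy
    have := Nat.le_mul_of_pos_left y hb
    omega

section AddCommMonoid

variable {M : Type*} [AddCommMonoid M]

lemma sum_eq_sum_filter_lt_add_eq_add_gt {α : Type*} (s : Finset α)
    (f : α → M) (g h : α → ℕ) :
    ∑ p ∈ s, f p = ∑ p ∈ s.filter (fun p => g p < h p), f p
      + ∑ p ∈ s.filter (fun p => g p = h p), f p
      + ∑ p ∈ s.filter (fun p => h p < g p), f p := by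
  rw [← sum_filter_add_sum_filter_not s (fun p => g p < h p), add_assoc]
  congr 1
  rw [← sum_filter_add_sum_filter_not _ (fun p => g p = h p), filter_filter, filter_filter]
  congr 2 <;> exact filter_congr fun p _ => by omega

variable (n : ℕ) (w : ℕ → ℕ → M)

lemma sum_twoProductReps_y_lt_x :
    ∑ p ∈ (twoProductReps n).filter (fun p => p.2.2 < p.1.2), w p.1.1 p.2.1
      = ∑ p ∈ (twoProductReps n).filter (fun p => p.1.1 < p.2.1), w p.1.1 (p.2.1 - p.1.1) := by
  refine sum_nbij' (fun p => ((p.1.1, p.1.2 - p.2.2), (p.1.1 + p.2.1, p.2.2)))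
    (fun p => ((p.1.1, p.1.2 + p.2.2), (p.2.1 - p.1.1, p.2.2))) ?_ ?_ ?_ ?_ ?_ <;>
    rintro ⟨⟨a, x⟩, b, y⟩ <;>
    simp only [mem_filter, mem_twoProductReps, Prod.mk.injEq, true_and, and_true,
      Nat.add_sub_cancel_left, Nat.add_sub_cancel, implies_true]
  · rintro ⟨⟨ha, hx, hb, hy, rfl⟩, hyx⟩
    have := Nat.mul_le_mul_left a hyx.le
    rw [Nat.mul_sub, add_mul]
    omega
  · rintro ⟨⟨ha, hx, hb, hy, rfl⟩, hab⟩
    have := Nat.mul_le_mul_right y hab.le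
    rw [Nat.sub_mul, mul_add]
    omega
  all_goals omega

lemma sum_twoProductReps_x_lt_y :
    ∑ p ∈ (twoProductReps n).filter (fun p => p.1.2 < p.2.2), w p.1.1 p.2.1
      = ∑ p ∈ (twoProductReps n).filter (fun p => p.2.1 < p.1.1), w (p.1.1 - p.2.1) p.2.1 := by
  refine sum_nbij' (fun p => ((p.1.1 + p.2.1, p.1.2), (p.2.1, p.2.2 - p.1.2)))
    (fun p => ((p.1.1 - p.2.1, p.1.2), (p.2.1, p.2.2 + p.1.2))) ?_ ?_ ?_ ?_ ?_ <;>
    rintro ⟨⟨a, x⟩, b, y⟩ <;>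
    simp only [mem_filter, mem_twoProductReps, Prod.mk.injEq, true_and, and_true,
      Nat.add_sub_cancel, implies_true]
  · rintro ⟨⟨ha, hx, hb, hy, rfl⟩, hxy⟩
    have := Nat.mul_le_mul_left b hxy.le
    rw [Nat.mul_sub, add_mul]
    omega
  · rintro ⟨⟨ha, hx, hb, hy, rfl⟩, hba⟩
    have := Nat.mul_le_mul_right x hba.le
    rw [Nat.sub_mul, mul_add]
    omega
  all_goals omega

lemma sum_twoProductReps_x_eq_y :
    ∑ p ∈ (twoProductReps n).filter (fun p => p.1.2 = p.2.2), w p.1.1 p.2.1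
      = ∑ d ∈ n.divisors, ∑ a ∈ Ico 1 d, w a (d - a) := by
  rw [sum_sigma']
  refine sum_nbij' (fun p => ⟨p.1.1 + p.2.1, p.1.1⟩)
    (fun s => ((s.2, n / s.1), (s.1 - s.2, n / s.1))) ?_ ?_ ?_ ?_ ?_
  · rintro ⟨⟨a, x⟩, b, y⟩
    simp only [mem_filter, mem_twoProductReps, mem_sigma, Nat.mem_divisors, mem_Ico]
    rintro ⟨⟨ha, hx, hb, -, rfl⟩, rfl⟩
    exact ⟨⟨⟨x, by ring⟩, by positivity⟩, ha, by omega⟩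
  · rintro ⟨d, a⟩
    simp only [mem_filter, mem_twoProductReps, mem_sigma, Nat.mem_divisors, mem_Ico, and_true]
    rintro ⟨⟨⟨c, rfl⟩, hn⟩, ha, had⟩
    rw [Nat.mul_div_cancel_left c (by omega), ← add_mul, Nat.add_sub_cancel' had.le]
    exact ⟨ha, Nat.pos_of_ne_zero (right_ne_zero_of_mul hn), by omega,
      Nat.pos_of_ne_zero (right_ne_zero_of_mul hn), rfl⟩
  · rintro ⟨⟨a, x⟩, b, y⟩
    simp only [mem_filter, mem_twoProductReps]
    rintro ⟨⟨ha, -, -, -, rfl⟩, rfl⟩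
    rw [← add_mul, Nat.mul_div_cancel_left x (by omega), Nat.add_sub_cancel_left]
  · rintro ⟨d, a⟩
    simp only [mem_sigma, mem_Ico]
    rintro ⟨-, -, had⟩
    rw [Nat.add_sub_cancel' had.le]
  · rintro ⟨⟨a, x⟩, b, y⟩ -
    simp only [Nat.add_sub_cancel_left]

lemma sum_twoProductReps_a_eq_b :
    ∑ p ∈ (twoProductReps n).filter (fun p => p.1.1 = p.2.1), w p.1.1 p.2.1
      = ∑ d ∈ n.divisors, (n / d - 1) • w d d := by
  have hcard (d : ℕ) : (n / d - 1) • w d d = ∑ _x ∈ Ico 1 (n / d), w d d := by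
    rw [sum_const, Nat.card_Ico]
  simp only [hcard]
  rw [sum_sigma']
  refine sum_nbij' (fun p => ⟨p.1.1, p.1.2⟩)
    (fun s => ((s.1, s.2), (s.1, n / s.1 - s.2))) ?_ ?_ ?_ ?_ ?_
  · rintro ⟨⟨a, x⟩, b, y⟩
    simp only [mem_filter, mem_twoProductReps, mem_sigma, Nat.mem_divisors, mem_Ico]
    rintro ⟨⟨ha, hx, -, hy, rfl⟩, rfl⟩
    rw [← mul_add, Nat.mul_div_cancel_left _ ha]
    exact ⟨⟨⟨x + y, rfl⟩, by positivity⟩, hx, by omega⟩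
  · rintro ⟨d, x⟩
    simp only [mem_filter, mem_twoProductReps, mem_sigma, Nat.mem_divisors, mem_Ico, and_true]
    rintro ⟨⟨⟨c, rfl⟩, hn⟩, hx, hxc⟩
    have hd := Nat.pos_of_ne_zero (left_ne_zero_of_mul hn)
    rw [Nat.mul_div_cancel_left c hd] at hxc ⊢
    rw [← mul_add, Nat.add_sub_cancel' hxc.le]
    exact ⟨hd, hx, hd, by omega, rfl⟩
  · rintro ⟨⟨a, x⟩, b, y⟩
    simp only [mem_filter, mem_twoProductReps]
    rintro ⟨⟨ha, -, -, -, rfl⟩, rfl⟩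
    rw [← mul_add, Nat.mul_div_cancel_left _ ha, Nat.add_sub_cancel_left]
  · rintro ⟨d, x⟩ -
    rfl
  · rintro ⟨⟨a, x⟩, b, y⟩
    simp only [mem_filter]
    rintro ⟨-, rfl⟩
    rfl

lemma sum_twoProductReps_eq_sum_divisors :
    ∑ p ∈ twoProductReps n, w p.1.1 p.2.1
      = ∑ m ∈ Ico 1 n, ∑ a ∈ m.divisors, ∑ b ∈ (n - m).divisors, w a b := by
  simp only [← sum_product']
  rw [sum_sigma']
  refine sum_nbij' (fun p => ⟨p.1.1 * p.1.2, (p.1.1, p.2.1)⟩)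
    (fun s => ((s.2.1, s.1 / s.2.1), (s.2.2, (n - s.1) / s.2.2))) ?_ ?_ ?_ ?_ ?_
  · rintro ⟨⟨a, x⟩, b, y⟩
    simp only [mem_twoProductReps, mem_sigma, mem_product, Nat.mem_divisors, mem_Ico]
    rintro ⟨ha, hx, hb, hy, rfl⟩
    rw [Nat.add_sub_cancel_left]
    have hax : 0 < a * x := by positivity
    have hby : 0 < b * y := by positivity
    exact ⟨⟨hax, by omega⟩, ⟨dvd_mul_right a x, hax.ne'⟩, dvd_mul_right b y, hby.ne'⟩
  · rintro ⟨m, a, b⟩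
    simp only [mem_twoProductReps, mem_sigma, mem_product, Nat.mem_divisors, mem_Ico]
    rintro ⟨⟨hm, hmn⟩, ⟨⟨c, rfl⟩, hac⟩, ⟨e, he⟩, hbe⟩
    rw [he] at hbe
    have ha := Nat.pos_of_ne_zero (left_ne_zero_of_mul hac)
    have hb := Nat.pos_of_ne_zero (left_ne_zero_of_mul hbe)
    rw [Nat.mul_div_cancel_left c ha, he, Nat.mul_div_cancel_left e hb]
    exact ⟨ha, Nat.pos_of_ne_zero (right_ne_zero_of_mul hac), hb,
      Nat.pos_of_ne_zero (right_ne_zero_of_mul hbe), by omega⟩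
  · rintro ⟨⟨a, x⟩, b, y⟩
    simp only [mem_twoProductReps]
    rintro ⟨ha, -, hb, -, rfl⟩
    rw [Nat.add_sub_cancel_left, Nat.mul_div_cancel_left x ha, Nat.mul_div_cancel_left y hb]
  · rintro ⟨m, a, b⟩
    simp only [mem_sigma, mem_product, Nat.mem_divisors]
    rintro ⟨-, ⟨ham, -⟩, -⟩
    rw [Nat.mul_div_cancel' ham]
  · intros
    rfl

end AddCommMonoid

theorem liouville_identity {M : Type*} [AddCommGroup M] (n : ℕ) (F G : ℕ → ℕ → M)
    (hlt : ∀ a b, a < b → F a b - F a (b - a) = G a b)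
    (hgt : ∀ a b, b < a → F a b - F (a - b) b = G a b) :
    ∑ m ∈ Ico 1 n, ∑ a ∈ m.divisors, ∑ b ∈ (n - m).divisors, G a b
      = ∑ d ∈ n.divisors, ∑ a ∈ Ico 1 d, F a (d - a)
        + ∑ d ∈ n.divisors, (n / d - 1) • (G d d - F d d) := by
  set R := twoProductReps n
  have hsplit (H : ℕ → ℕ → M) := sum_eq_sum_filter_lt_add_eq_add_gt R
    (fun p => H p.1.1 p.2.1) (fun p => p.1.1) (fun p => p.2.1)
  have hcut := sum_eq_sum_filter_lt_add_eq_add_gt R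
    (fun p => F p.1.1 p.2.1) (fun p => p.1.2) (fun p => p.2.2)
  rw [sum_twoProductReps_x_lt_y, sum_twoProductReps_x_eq_y,
    sum_twoProductReps_y_lt_x] at hcut
  have hGlt : ∑ p ∈ R.filter (fun p => p.1.1 < p.2.1), G p.1.1 p.2.1
      = ∑ p ∈ R.filter (fun p => p.1.1 < p.2.1), F p.1.1 p.2.1
        - ∑ p ∈ R.filter (fun p => p.1.1 < p.2.1), F p.1.1 (p.2.1 - p.1.1) := by
    rw [← sum_sub_distrib]
    exact sum_congr rfl fun p hp => (hlt _ _ (mem_filter.mp hp).2).symm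
  have hGgt : ∑ p ∈ R.filter (fun p => p.2.1 < p.1.1), G p.1.1 p.2.1
      = ∑ p ∈ R.filter (fun p => p.2.1 < p.1.1), F p.1.1 p.2.1
        - ∑ p ∈ R.filter (fun p => p.2.1 < p.1.1), F (p.1.1 - p.2.1) p.2.1 := by
    rw [← sum_sub_distrib]
    exact sum_congr rfl fun p hp => (hgt _ _ (mem_filter.mp hp).2).symm
  rw [← sum_twoProductReps_eq_sum_divisors, hsplit G, hGlt, hGgt]
  simp only [smul_sub, sum_sub_distrib, ← sum_twoProductReps_a_eq_b]
  have := (hsplit F).symm.trans hcut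
  linear_combination (norm := abel) this

end Liouville

section PowerSums

lemma sum_range_pow_one (d : ℕ) : ∑ a ∈ range d, (a : ℚ) = ((d : ℚ) ^ 2 - d) / 2 := by
  induction d with
  | zero => simp
  | succ m ih => rw [sum_range_succ, ih]; push_cast; ring

lemma sum_range_pow_two (d : ℕ) :
    ∑ a ∈ range d, (a : ℚ) ^ 2 = (2 * (d : ℚ) ^ 3 - 3 * d ^ 2 + d) / 6 := by
  induction d with
  | zero => simp
  | succ m ih => rw [sum_range_succ, ih]; push_cast; ring

lemma sum_range_pow_three (d : ℕ) :
    ∑ a ∈ range d, (a : ℚ) ^ 3 = ((d : ℚ) ^ 4 - 2 * d ^ 3 + d ^ 2) / 4 := by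
  induction d with
  | zero => simp
  | succ m ih => rw [sum_range_succ, ih]; push_cast; ring

lemma sum_range_pow_four (d : ℕ) :
    ∑ a ∈ range d, (a : ℚ) ^ 4 = (6 * (d : ℚ) ^ 5 - 15 * d ^ 4 + 10 * d ^ 3 - d) / 30 := by
  induction d with
  | zero => simp
  | succ m ih => rw [sum_range_succ, ih]; push_cast; ring

lemma sum_range_pow_five (d : ℕ) : ∑ a ∈ range d, (a : ℚ) ^ 5
    = (2 * (d : ℚ) ^ 6 - 6 * d ^ 5 + 5 * d ^ 4 - d ^ 2) / 12 := by
  induction d with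
  | zero => simp
  | succ m ih => rw [sum_range_succ, ih]; push_cast; ring

lemma sum_range_pow_six (d : ℕ) : ∑ a ∈ range d, (a : ℚ) ^ 6
    = (6 * (d : ℚ) ^ 7 - 21 * d ^ 6 + 21 * d ^ 5 - 7 * d ^ 3 + d) / 42 := by
  induction d with
  | zero => simp
  | succ m ih => rw [sum_range_succ, ih]; push_cast; ring

lemma sum_Ico_one_eq_sum_range_sub {M : Type*} [AddCommGroup M] (f : ℕ → M) {d : ℕ}
    (hd : 1 ≤ d) : ∑ a ∈ Ico 1 d, f a = ∑ a ∈ range d, f a - f 0 := by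
  rw [sum_Ico_eq_sub _ hd, sum_range_one]

end PowerSums

section Convolutions

lemma liouville_identity_rat (n : ℕ) (P Q : ℚ → ℚ → ℚ)
    (hlt : ∀ x y, P x y - P x (y - x) = Q x y) (hgt : ∀ x y, P x y - P (x - y) y = Q x y) :
    ∑ m ∈ Ico 1 n, ∑ a ∈ m.divisors, ∑ b ∈ (n - m).divisors, Q a b
      = ∑ d ∈ n.divisors, ∑ a ∈ Ico 1 d, P a (d - a)
        + ∑ d ∈ n.divisors, (n / d - 1) • (Q d d - P d d) := by
  rw [liouville_identity n (fun a b => P a b) (fun a b => Q a b)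
    (fun a b h => by rw [Nat.cast_sub h.le]; exact hlt _ _)
    (fun a b h => by rw [Nat.cast_sub h.le]; exact hgt _ _)]
  congr 1
  exact sum_congr rfl fun d _ => sum_congr rfl fun a ha => by
    rw [Nat.cast_sub (mem_Ico.1 ha).2.le]

lemma cast_sigma' (j n : ℕ) : (sigma' j n : ℚ) = ∑ d ∈ n.divisors, (d : ℚ) ^ j := by
  simp [sigma']

lemma cast_sigma'_one (n : ℕ) : (sigma' 1 n : ℚ) = ∑ d ∈ n.divisors, (d : ℚ) := by
  simp [sigma']

lemma sum_Ico_mul_sub_comm {R : Type*} [CommSemiring R] (n : ℕ) (f g : ℕ → R) :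
    ∑ m ∈ Ico 1 n, f m * g (n - m) = ∑ m ∈ Ico 1 n, g m * f (n - m) := by
  refine sum_nbij' (n - ·) (n - ·) ?_ ?_ ?_ ?_ ?_ <;> simp only [mem_Ico] <;> intro m hm
  · omega
  · omega
  · omega
  · omega
  · rw [Nat.sub_sub_self hm.2.le, mul_comm]

lemma sum_Ico_sum_divisors_pow_mul_pow (n i j : ℕ) (c : ℚ) :
    ∑ m ∈ Ico 1 n, ∑ a ∈ m.divisors, ∑ b ∈ (n - m).divisors,
        c * ((a : ℚ) ^ i * (b : ℚ) ^ j)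
      = c * ∑ m ∈ Ico 1 n, (sigma' i m : ℚ) * sigma' j (n - m) := by
  simp_rw [cast_sigma', sum_mul_sum, mul_sum]

lemma sum_divisors_div_sub_one_nsmul (n j : ℕ) (c : ℚ) (f : ℕ → ℚ)
    (hf : ∀ d, f d = c * d ^ (j + 1)) :
    ∑ d ∈ n.divisors, (n / d - 1) • f d = c * (n * sigma' j n - sigma' (j + 1) n) := by
  rw [cast_sigma', cast_sigma', mul_sum, ← sum_sub_distrib, mul_sum]
  refine sum_congr rfl fun d hd => ?_
  obtain ⟨⟨e, rfl⟩, hn⟩ := Nat.mem_divisors.mp hd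
  rw [hf, Nat.mul_div_cancel_left e (Nat.pos_of_ne_zero (left_ne_zero_of_mul hn)), nsmul_eq_mul,
    Nat.cast_sub (Nat.pos_of_ne_zero (right_ne_zero_of_mul hn))]
  push_cast
  ring

lemma sum_Ico_sigma_one_mul_sigma_one (n : ℕ) :
    12 * ∑ m ∈ Ico 1 n, (sigma' 1 m : ℚ) * sigma' 1 (n - m)
      = 5 * sigma' 3 n + sigma' 1 n - 6 * n * sigma' 1 n := by
  have hF (d : ℕ) (hd : 1 ≤ d) : ∑ a ∈ Ico 1 d, ((a : ℚ) ^ 2 + a * (d - a) + (d - a) ^ 2)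
      = (5 * (d : ℚ) ^ 3 - 6 * d ^ 2 + d) / 6 := by
    rw [sum_Ico_one_eq_sum_range_sub _ hd, Nat.cast_zero]
    ring_nf
    simp only [sum_add_distrib, sum_neg_distrib, ← sum_mul, sum_const, card_range, nsmul_eq_mul,
      sum_range_pow_one, sum_range_pow_two]
    ring
  have h := liouville_identity_rat n (fun x y => x ^ 2 + x * y + y ^ 2)
    (fun x y => 2 * (x ^ 1 * y ^ 1)) (fun _ _ => by ring) (fun _ _ => by ring)
  rw [sum_Ico_sum_divisors_pow_mul_pow, sum_congr rfl fun d hd => hF d (Nat.pos_of_mem_divisors hd),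
    sum_divisors_div_sub_one_nsmul n 1 (-1) _ fun d => by ring] at h
  simp only [← sum_div, sum_add_distrib, sum_sub_distrib, ← mul_sum, ← cast_sigma',
    ← cast_sigma'_one, Nat.reduceAdd] at h
  linear_combination 6 * h

lemma sum_Ico_sigma_one_mul_sigma_three (n : ℕ) :
    240 * ∑ m ∈ Ico 1 n, (sigma' 1 m : ℚ) * sigma' 3 (n - m)
      = 21 * sigma' 5 n + 10 * sigma' 3 n - sigma' 1 n - 30 * n * sigma' 3 n := by
  have hF (d : ℕ) (hd : 1 ≤ d) :
      ∑ a ∈ Ico 1 d, ((a : ℚ) ^ 2 + a * (d - a) + (d - a) ^ 2) ^ 2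
        = (21 * (d : ℚ) ^ 5 - 30 * d ^ 4 + 10 * d ^ 3 - d) / 30 := by
    rw [sum_Ico_one_eq_sum_range_sub _ hd, Nat.cast_zero]
    ring_nf
    simp only [sum_add_distrib, sum_sub_distrib, sum_neg_distrib, ← sum_mul, sum_const,
      card_range, nsmul_eq_mul, sum_range_pow_one, sum_range_pow_two, sum_range_pow_three,
      sum_range_pow_four]
    ring
  have h := liouville_identity_rat n (fun x y => (x ^ 2 + x * y + y ^ 2) ^ 2)
    (fun x y => 4 * (x ^ 3 * y ^ 1) + 4 * (x ^ 1 * y ^ 3)) (fun _ _ => by ring)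
    (fun _ _ => by ring)
  simp only [sum_add_distrib] at h
  rw [sum_Ico_sum_divisors_pow_mul_pow, sum_Ico_sum_divisors_pow_mul_pow,
    sum_Ico_mul_sub_comm n (fun m => (sigma' 3 m : ℚ)) (fun m => (sigma' 1 m : ℚ)),
    sum_congr rfl fun d hd => hF d (Nat.pos_of_mem_divisors hd),
    sum_divisors_div_sub_one_nsmul n 3 (-1) _ fun d => by ring] at h
  simp only [← sum_div, sum_add_distrib, sum_sub_distrib, ← mul_sum, ← cast_sigma',
    ← cast_sigma'_one, Nat.reduceAdd] at h
  linear_combination 30 * h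

lemma sum_Ico_sigma_three_mul_sigma_three (n : ℕ) :
    120 * ∑ m ∈ Ico 1 n, (sigma' 3 m : ℚ) * sigma' 3 (n - m) = sigma' 7 n - sigma' 3 n := by
  have hF (d : ℕ) (hd : 1 ≤ d) : ∑ a ∈ Ico 1 d, ((a : ℚ) * (d - a) * (a + (d - a))) ^ 2
      = ((d : ℚ) ^ 7 - d ^ 3) / 30 := by
    rw [sum_Ico_one_eq_sum_range_sub _ hd, Nat.cast_zero]
    ring_nf
    simp only [sum_add_distrib, sum_sub_distrib, ← sum_mul, sum_range_pow_two,
      sum_range_pow_three, sum_range_pow_four]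
    ring
  have h := liouville_identity_rat n (fun x y => (x * y * (x + y)) ^ 2)
    (fun x y => 4 * (x ^ 3 * y ^ 3)) (fun _ _ => by ring) (fun _ _ => by ring)
  rw [sum_Ico_sum_divisors_pow_mul_pow, sum_congr rfl fun d hd => hF d (Nat.pos_of_mem_divisors hd),
    sum_divisors_div_sub_one_nsmul n 5 0 _ fun d => by ring] at h
  simp only [← sum_div, sum_sub_distrib, ← cast_sigma'] at h
  linear_combination 30 * h

lemma sum_Ico_sigma_one_mul_sigma_five (n : ℕ) :
    504 * ∑ m ∈ Ico 1 n, (sigma' 1 m : ℚ) * sigma' 5 (n - m)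
      = sigma' 1 n + 21 * sigma' 5 n + 20 * sigma' 7 n - 42 * n * sigma' 5 n := by
  have hF (d : ℕ) (hd : 1 ≤ d) :
      ∑ a ∈ Ico 1 d, ((a : ℚ) ^ 6 + (d - a) ^ 6 + (a + (d - a)) ^ 6
          - 10 * ((a : ℚ) * (d - a) * (a + (d - a))) ^ 2)
        = (20 * (d : ℚ) ^ 7 - 42 * d ^ 6 + 21 * d ^ 5 + d) / 21 := by
    rw [sum_Ico_one_eq_sum_range_sub _ hd, Nat.cast_zero]
    ring_nf
    simp only [sum_add_distrib, sum_sub_distrib, sum_neg_distrib, ← sum_mul, sum_const,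
      card_range, nsmul_eq_mul, sum_range_pow_one, sum_range_pow_two, sum_range_pow_four,
      sum_range_pow_five, sum_range_pow_six]
    ring
  have h := liouville_identity_rat n
    (fun x y => x ^ 6 + y ^ 6 + (x + y) ^ 6 - 10 * (x * y * (x + y)) ^ 2)
    (fun x y => 12 * (x ^ 5 * y ^ 1) + 12 * (x ^ 1 * y ^ 5)) (fun _ _ => by ring)
    (fun _ _ => by ring)
  simp only [sum_add_distrib] at h
  rw [sum_Ico_sum_divisors_pow_mul_pow, sum_Ico_sum_divisors_pow_mul_pow,
    sum_Ico_mul_sub_comm n (fun m => (sigma' 5 m : ℚ)) (fun m => (sigma' 1 m : ℚ)),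
    sum_congr rfl fun d hd => hF d (Nat.pos_of_mem_divisors hd),
    sum_divisors_div_sub_one_nsmul n 5 (-2) _ fun d => by ring] at h
  simp only [← sum_div, sum_add_distrib, sum_sub_distrib, ← mul_sum, ← cast_sigma',
    ← cast_sigma'_one, Nat.reduceAdd] at h
  linear_combination 21 * h

end Convolutions

section Ramanujan

def eisSeries (c : ℚ) (k : ℕ) : ℚ⟦X⟧ := mk fun n => if n = 0 then 1 else c * sigma' k n

lemma E2_eq_eisSeries : E2 = eisSeries (-24) 1 := rfl
lemma E4_eq_eisSeries : E4 = eisSeries 240 3 := rfl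
lemma E6_eq_eisSeries : E6 = eisSeries (-504) 5 := rfl

lemma constantCoeff_eisSeries (c : ℚ) (k : ℕ) : constantCoeff (eisSeries c k) = 1 := by
  simp [eisSeries, ← coeff_zero_eq_constantCoeff_apply]

lemma coeff_eisSeries_of_pos (c : ℚ) (k : ℕ) {n : ℕ} (hn : 0 < n) :
    coeff n (eisSeries c k) = c * sigma' k n := by
  simp [eisSeries, hn.ne']

lemma coeff_eisSeries_mul (a b : ℚ) (i j : ℕ) {n : ℕ} (hn : 0 < n) :
    coeff n (eisSeries a i * eisSeries b j) = a * sigma' i n + b * sigma' j n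
      + a * b * ∑ m ∈ Ico 1 n, (sigma' i m : ℚ) * sigma' j (n - m) := by
  rw [coeff_mul, Nat.sum_antidiagonal_eq_sum_range_succ_mk, sum_range_succ, range_eq_Ico,
    sum_eq_sum_Ico_succ_bot hn, mul_sum,
    sum_congr rfl fun m hm => by rw [coeff_eisSeries_of_pos _ _ (mem_Ico.1 hm).1,
      coeff_eisSeries_of_pos _ _ (Nat.sub_pos_of_lt (mem_Ico.1 hm).2)]]
  simp [coeff_eisSeries_of_pos _ _ hn, constantCoeff_eisSeries]
  ring_nf

lemma ramanujan_E2 : 12 * Dq E2 = E2 ^ 2 - E4 := by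
  ext n
  rcases n.eq_zero_or_pos with rfl | hn
  · simp [sq, E2_eq_eisSeries, E4_eq_eisSeries, constantCoeff_Dq, constantCoeff_eisSeries]
  · rw [E2_eq_eisSeries, E4_eq_eisSeries]
    simp only [map_sub, coeff_ofNat_mul, coeff_Dq, sq, coeff_eisSeries_mul _ _ _ _ hn,
      coeff_eisSeries_of_pos _ _ hn]
    linear_combination -48 * sum_Ico_sigma_one_mul_sigma_one n

lemma ramanujan_E4 : 3 * Dq E4 = E2 * E4 - E6 := by
  ext n
  rcases n.eq_zero_or_pos with rfl | hn
  · simp [E2_eq_eisSeries, E4_eq_eisSeries, E6_eq_eisSeries, constantCoeff_Dq,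
      constantCoeff_eisSeries]
  · rw [E2_eq_eisSeries, E4_eq_eisSeries, E6_eq_eisSeries]
    simp only [map_sub, coeff_ofNat_mul, coeff_Dq, coeff_eisSeries_mul _ _ _ _ hn,
      coeff_eisSeries_of_pos _ _ hn]
    linear_combination 24 * sum_Ico_sigma_one_mul_sigma_three n

lemma ramanujan_E6 : 2 * Dq E6 = E2 * E6 - E4 ^ 2 := by
  ext n
  rcases n.eq_zero_or_pos with rfl | hn
  · simp [sq, E2_eq_eisSeries, E4_eq_eisSeries, E6_eq_eisSeries, constantCoeff_Dq,
      constantCoeff_eisSeries]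
  · rw [E2_eq_eisSeries, E4_eq_eisSeries, E6_eq_eisSeries]
    simp only [map_sub, coeff_ofNat_mul, coeff_Dq, sq, coeff_eisSeries_mul _ _ _ _ hn,
      coeff_eisSeries_of_pos _ _ hn]
    linear_combination -24 * sum_Ico_sigma_one_mul_sigma_five n
      + 480 * sum_Ico_sigma_three_mul_sigma_three n

end Ramanujan

instance : CharZero ℚ⟦X⟧ := (constantCoeff (R := ℚ)).charZero

section QuasimodularIdentities

lemma Δ'_eq : 1728 * Δ' = E4 ^ 3 - E6 ^ 2 := by
  rw [Δ', ← mul_assoc, ← map_ofNat C, ← map_mul]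
  norm_num

lemma Dq_Δ' : Dq Δ' = E2 * Δ' := by
  refine mul_left_cancel₀ (by norm_num : (1728 : ℚ⟦X⟧) ≠ 0) ?_
  have h := congrArg Dq Δ'_eq
  simp only [Dq_mul, Dq_sub, Dq_pow, Dq_ofNat] at h
  linear_combination h + E4 ^ 2 * ramanujan_E4 - E6 * ramanujan_E6 - E2 * Δ'_eq

lemma wronskian_E4_E6 : 2 * (E4 * Dq E6) = 3 * (E6 * Dq E4) - 1728 * Δ' := by
  linear_combination E4 * ramanujan_E6 - E6 * ramanujan_E4 + Δ'_eq

lemma Dq_ramanujan_E2 : 12 * Dq (Dq E2) = 2 * (E2 * Dq E2) - Dq E4 := by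
  have h := congrArg Dq ramanujan_E2
  simp only [Dq_mul, Dq_sub, Dq_pow, Dq_ofNat] at h
  linear_combination h

lemma Dq_ramanujan_E4 : 3 * Dq (Dq E4) = Dq E2 * E4 + E2 * Dq E4 - Dq E6 := by
  have h := congrArg Dq ramanujan_E4
  simp only [Dq_mul, Dq_sub, Dq_ofNat] at h
  linear_combination h

lemma Dq_ramanujan_E6 : 2 * Dq (Dq E6) = Dq E2 * E6 + E2 * Dq E6 - 2 * (E4 * Dq E4) := by
  have h := congrArg Dq ramanujan_E6
  simp only [Dq_mul, Dq_sub, Dq_pow, Dq_ofNat] at h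
  linear_combination h

lemma E4_mul_Dq_Dq_E4 : 4 * (E4 * Dq (Dq E4)) - 5 * Dq E4 ^ 2 = 960 * Δ' := by
  refine mul_left_cancel₀ (by norm_num : (36 : ℚ⟦X⟧) ≠ 0) ?_
  linear_combination 48 * E4 * Dq_ramanujan_E4 + 4 * E4 ^ 2 * ramanujan_E2
    + 16 * E2 * E4 * ramanujan_E4 - 24 * E4 * ramanujan_E6
    - 20 * (3 * Dq E4 + E2 * E4 - E6) * ramanujan_E4 - 20 * Δ'_eq

lemma Dq_E4_ode : 2 * Dq (Dq (Dq E4)) - 2 * (E2 * Dq (Dq E4)) + 5 * (Dq E2 * Dq E4) = 0 := by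
  have h := congrArg Dq Dq_ramanujan_E4
  simp only [Dq_mul, Dq_add, Dq_sub, Dq_ofNat, zero_mul, zero_add] at h
  refine mul_left_cancel₀ (by norm_num : (36 : ℚ⟦X⟧) ≠ 0) ?_
  linear_combination 24 * h + 2 * E4 * Dq_ramanujan_E2 - 12 * Dq_ramanujan_E6
    - 16 * E2 * Dq_ramanujan_E4 + (-(E2 * E4) - E6 + 19 * Dq E4) * ramanujan_E2
    + (E2 ^ 2 + E4) * ramanujan_E4 + 2 * E2 * ramanujan_E6

end QuasimodularIdentities

section KanekoKoike

lemma g_zero : g 0 = 1 := rfl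

lemma g_one : 240 * g 1 = Dq E4 := by
  rw [g, ← mul_assoc, ← map_ofNat C, ← map_mul]
  norm_num

lemma g_add_two (m : ℕ) : g (m + 2) = E6 * g (m + 1) + C (μ m) * (Δ' * g m) := rfl

lemma μ_zero : μ 0 = -1 := rfl

lemma μ_one : μ 1 = 462 := by norm_num [μ]

lemma μ_succ_succ (m : ℕ) :
    ((m : ℚ⟦X⟧) + 3) * C (μ (m + 2)) = (m + 1) * C (μ (m + 1)) + 864 := by
  have h : ((m : ℚ) + 3) * μ (m + 2) = (m + 1) * μ (m + 1) + 864 := by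
    simp only [μ, Nat.add_eq_zero_iff, one_ne_zero, OfNat.ofNat_ne_zero, and_false, if_false]
    push_cast
    field_simp
    ring
  simpa [map_ofNat C] using congrArg C h

lemma g_first_order_zero :
    4 * (E4 * Dq (g 1)) - 5 * (Dq E4 * g 1) - 4 * Δ' = 0 := by
  refine mul_left_cancel₀ (by norm_num : (240 : ℚ⟦X⟧) ≠ 0) ?_
  have hDg := congrArg Dq g_one
  simp only [Dq_mul, Dq_ofNat] at hDg
  linear_combination 4 * E4 * hDg - 5 * Dq E4 * g_one + E4_mul_Dq_Dq_E4

lemma g_first_order (k : ℕ) :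
    4 * (E4 * Dq (g (k + 1))) - (6 * k + 5) * (Dq E4 * g (k + 1))
      + 4 * (k + 1) * C (μ k) * (Δ' * g k) = 0 := by
  induction k using Nat.twoStepInduction with
  | zero =>
    rw [g_zero, μ_zero, Nat.cast_zero, map_neg, map_one]
    linear_combination g_first_order_zero
  | one =>
    have hDg := congrArg Dq (g_add_two 0)
    simp only [Dq_add, Dq_mul, Dq_C, Dq_Δ', zero_mul, zero_add] at hDg
    rw [hDg, g_add_two, g_zero, Dq_one, μ_zero, μ_one, map_neg, map_one, Nat.cast_one,
      map_ofNat C]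
    linear_combination E6 * g_first_order_zero + 2 * g 1 * wronskian_E4_E6
      + 4 * Δ' * ramanujan_E4 + Δ' * g_one
  | more m ih₀ ih₁ =>
    have hDg := congrArg Dq (g_add_two (m + 1))
    simp only [Dq_add, Dq_mul, Dq_C, Dq_Δ', zero_mul, zero_add] at hDg
    rw [hDg, g_add_two (m + 1)]
    push_cast at ih₁ ⊢
    linear_combination E6 * ih₁ + C (μ (m + 1)) * Δ' * ih₀ + 2 * g (m + 2) * wronskian_E4_E6
      - 4 * C (μ (m + 1)) * (Δ' * g (m + 1)) * ramanujan_E4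
      + (4 * (Δ' * g (m + 1)) * E6 + 4 * C (μ m) * (Δ' * (Δ' * g m))) * μ_succ_succ m
      - 3456 * Δ' * g_add_two m + (4 * m + 12) * C (μ (m + 2)) * Δ' * g_add_two m

lemma g_ode (k : ℕ) :
    2 * Dq (Dq (g k)) - 2 * k * (E2 * Dq (g k)) + k * (6 * k - 1) * (Dq E2 * g k) = 0 := by
  induction k using Nat.twoStepInduction with
  | zero => simp [g_zero, Dq_one, Dq_zero]
  | one =>
    refine mul_left_cancel₀ (by norm_num : (240 : ℚ⟦X⟧) ≠ 0) ?_
    have hDg := congrArg Dq g_one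
    simp only [Dq_mul, Dq_ofNat, zero_mul, zero_add] at hDg
    have hDDg := congrArg Dq hDg
    simp only [Dq_mul, Dq_ofNat, zero_mul, zero_add] at hDDg
    rw [Nat.cast_one]
    linear_combination 2 * hDDg - 2 * E2 * hDg + 5 * Dq E2 * g_one + Dq_E4_ode
  | more m ih₀ ih₁ =>
    have hDg := congrArg Dq (g_add_two m)
    simp only [Dq_add, Dq_mul, Dq_C, Dq_Δ', zero_mul, zero_add] at hDg
    have hDDg := congrArg Dq hDg
    simp only [Dq_add, Dq_mul, Dq_C, Dq_Δ', zero_mul, zero_add] at hDDg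
    refine mul_left_cancel₀ (by norm_num : (2 : ℚ⟦X⟧) ≠ 0) ?_
    rw [hDDg, hDg, g_add_two]
    push_cast at ih₁ ⊢
    linear_combination 2 * E6 * ih₁ + 2 * C (μ m) * Δ' * ih₀ + 2 * g (m + 1) * Dq_ramanujan_E6
      + 4 * Dq (g (m + 1)) * ramanujan_E6 - (2 * m + 3) * E2 * g (m + 1) * ramanujan_E6
      + (2 * m + 3) * E6 * g (m + 1) * ramanujan_E2 - (2 * m + 3) * E4 * g (m + 1) * ramanujan_E4
      + (4 * m + 4) * C (μ m) * (Δ' * g m) * ramanujan_E2 - E4 * g_first_order m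

end KanekoKoike

lemma conjugated_ode_of_ode_mul {k : ℕ} {W φ : ℚ⟦X⟧} (hW0 : W ≠ 0)
    (hW : 2 * Dq W = k * (1 + E2) * W)
    (hode : 2 * Dq (Dq (W * φ)) - 2 * k * (E2 * Dq (W * φ)) + k * (6 * k - 1) * (Dq E2 * (W * φ))
      = 0) :
    4 * (Dq (Dq φ) + k * Dq φ) = k ^ 2 * ((E4 - 1) * φ) := by
  have hDW := congrArg Dq hW
  simp only [Dq_mul, Dq_add, Dq_ofNat, Dq_natCast, Dq_one, zero_mul, zero_add] at hDW hode
  refine mul_left_cancel₀ hW0 ?_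
  linear_combination 2 * hode - 2 * φ * hDW - k * φ * (1 + E2) * hW - 4 * Dq φ * hW
    + 2 * k * E2 * φ * hW - k ^ 2 * W * φ * ramanujan_E2

theorem ode_weight_6k_conjugated_general (k : ℕ) (u S : PowerSeries ℚ)
    (hu : g k = PowerSeries.X ^ k * u)
    (hS1 : PowerSeries.constantCoeff S = 1)
    (hS2 : PowerSeries.X * S ^ 2 = Δ') :
    Dq (Dq (u * (S⁻¹) ^ k)) + PowerSeries.C (k:ℚ) * Dq (u * (S⁻¹) ^ k)
      = PowerSeries.C ((k:ℚ)^2/4) * ((E4 - 1) * (u * (S⁻¹) ^ k)) := by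
  have hS : S * S⁻¹ = 1 := PowerSeries.mul_inv_cancel S (by simp [hS1])
  have hW0 : (X * S) ^ k ≠ 0 := pow_ne_zero _ (mul_ne_zero X_ne_zero fun h => by simp [h] at hS1)
  have hW : 2 * Dq ((X * S) ^ k) = (k : ℚ⟦X⟧) * (1 + E2) * (X * S) ^ k := by
    refine two_mul_Dq_of_sq_eq hW0 (V := (X * Δ') ^ k) (by rw [← hS2]; ring) ?_
    exact Dq_pow_of_Dq_eq (by rw [Dq_mul, Dq_X, Dq_Δ']; ring) k
  have hg : g k = (X * S) ^ k * (u * S⁻¹ ^ k) := by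
    rw [hu, show (X * S) ^ k * (u * S⁻¹ ^ k) = X ^ k * u * (S * S⁻¹) ^ k by ring, hS, one_pow,
      mul_one]
  have h := conjugated_ode_of_ode_mul hW0 hW (hg ▸ g_ode k)
  have hC : 4 * C ((k : ℚ) ^ 2 / 4) = (k : ℚ⟦X⟧) ^ 2 := by
    rw [← map_ofNat C, ← map_mul, ← map_natCast C, ← map_pow]
    congr 1
    ring
  refine mul_left_cancel₀ (by norm_num : (4 : ℚ⟦X⟧) ≠ 0) ?_
  rw [map_natCast]
  linear_combination h - (E4 - 1) * (u * S⁻¹ ^ k) * hC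

/-- writing `g(k) = q^k·u` and `φ = u·S⁻ᵏ`, one has
`D²(φ) + k·D(φ) = (k²/4)·(E₄ − 1)·φ`, i.e.
`D²(f_{1,6k}·Δ^{−k/2}) = (k²/4)·E₄·(f_{1,6k}·Δ^{−k/2})` after factoring out `q^{k/2}`. -/
theorem ode_weight_6k_conjugated (k : ℕ) (hk : 1 ≤ k) (u S : PowerSeries ℚ)
    (hu : g k = PowerSeries.X ^ k * u)
    (hS1 : PowerSeries.constantCoeff S = 1)
    (hS2 : PowerSeries.X * S ^ 2 = Δ') :
    Dq (Dq (u * (S⁻¹) ^ k)) + PowerSeries.C (k:ℚ) * Dq (u * (S⁻¹) ^ k)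
      = PowerSeries.C ((k:ℚ)^2/4) * ((E4 - 1) * (u * (S⁻¹) ^ k)) :=
  ode_weight_6k_conjugated_general k u S hu hS1 hS2
end

section
/- Let k ∈ ℕ and μ ∈ ℚ, and set B := q·Φ_{k+2} + μ·(E₆·S⁻¹·Φ_{k+1} − Φ_k) ∈ ℚ[[q]]. Then the constant coefficient of B is 0, and the coefficient of q in B is 0 if and only if μ·12(6k+5)(6k+13) = (k+1)(k+2), i.e. if and only if μ = (μ*_{k+1})⁻¹ where μ*_{k+1} = 12(6k+5)(6k+13)/((k+1)(k+2)). -/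
open PowerSeries

noncomputable section

/-- `A_k = (k²/4 − 1/12)·E₄ + (1/12)·E₆²·E₄⁻²`. -/
def A (k : ℕ) : PowerSeries ℚ :=
  PowerSeries.C ((k:ℚ)^2/4 - 1/12) * E4 + PowerSeries.C (1/12) * E6^2 * (E4⁻¹)^2

/-- The coefficients `α_k(n)`: `α_k(0) = 1` and
`α_k(n) = (1/(n(n+k)))·∑_{m=1}^{n} a_m·α_k(n−m)` where `a_m` is the `m`-th coefficient of `A_k`. -/
def α (k : ℕ) : ℕ → ℚ
  | 0 => 1
  | (n+1) => (1 / (((n:ℚ)+1) * ((n:ℚ)+1+(k:ℚ)))) *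
      ∑ i ∈ Finset.range (n+1), (PowerSeries.coeff (i+1) (A k)) * α k (n - i)
  decreasing_by exact Nat.lt_succ_of_le (Nat.sub_le n i)

/-- `Φ_k = ∑_{n≥0} α_k(n)qⁿ`. -/
def Φ (k : ℕ) : PowerSeries ℚ := PowerSeries.mk fun n => α k n

end

/-!
Only the first three coefficients of the Eisenstein series matter. Since `Δ = q − 24q² + ⋯`,
the square root `S` of `Δ/q` begins `1 − 12q`, so `E₆·S⁻¹ = 1 − 492q + ⋯`. The recursion gives
`α_j(1) = a₁/(j+1)` with `a₁ = 60j² − 144`, every `Φ_j` has constant term `1`, and the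
coefficient of `q` in `B` becomes `1 − μ·12(6k+5)(6k+13)/((k+1)(k+2))`.
-/

namespace PowerSeries

theorem coeff_two_mul {R : Type*} [Semiring R] (φ ψ : R⟦X⟧) :
    coeff 2 (φ * ψ) =
      constantCoeff φ * coeff 2 ψ + coeff 1 φ * coeff 1 ψ + coeff 2 φ * constantCoeff ψ := by
  have : Finset.HasAntidiagonal.antidiagonal 2 = {(0, 2), (1, 1), (2, 0)} := rfl
  rw [coeff_mul, this, Finset.sum_insert (by decide), Finset.sum_insert (by decide),
    Finset.sum_singleton, coeff_zero_eq_constantCoeff, add_assoc]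

theorem coeff_one_inv {k : Type*} [Field k] (φ : k⟦X⟧) :
    coeff 1 φ⁻¹ = -coeff 1 φ / constantCoeff φ ^ 2 := by
  have : Finset.HasAntidiagonal.antidiagonal 1 = {(0, 1), (1, 0)} := rfl
  rw [coeff_inv, this, Finset.sum_pair (by decide)]
  simp only [one_ne_zero, if_false, lt_irrefl, zero_lt_one, if_true, zero_add,
    coeff_zero_eq_constantCoeff, constantCoeff_inv]
  ring

end PowerSeries

theorem constantCoeff_E4 : constantCoeff E4 = 1 := by simp [E4]

theorem coeff_one_E4 : coeff 1 E4 = 240 := by simp [E4, sigma']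

theorem coeff_two_E4 : coeff 2 E4 = 2160 := by
  norm_num [E4, sigma', show (2 : ℕ).divisors = {1, 2} from rfl]

theorem constantCoeff_E6 : constantCoeff E6 = 1 := by simp [E6]

theorem coeff_one_E6 : coeff 1 E6 = -504 := by simp [E6, sigma']

theorem coeff_two_E6 : coeff 2 E6 = -16632 := by
  norm_num [E6, sigma', show (2 : ℕ).divisors = {1, 2} from rfl]

theorem coeff_two_Δ' : coeff 2 Δ' = -24 := by
  have hE4 : coeff 2 (E4 ^ 3) = 179280 := by
    rw [pow_succ, coeff_two_mul, sq, coeff_two_mul, coeff_one_mul, map_mul]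
    simp only [constantCoeff_E4, coeff_one_E4, coeff_two_E4]
    norm_num
  have hE6 : coeff 2 (E6 ^ 2) = 220752 := by
    rw [sq, coeff_two_mul]
    simp only [constantCoeff_E6, coeff_one_E6, coeff_two_E6]
    norm_num
  rw [Δ', coeff_C_mul, map_sub, hE4, hE6]
  norm_num

theorem coeff_one_A (k : ℕ) : coeff 1 (A k) = 60 * (k : ℚ) ^ 2 - 144 := by
  rw [A, map_add, coeff_C_mul, mul_assoc, coeff_C_mul, coeff_one_mul, coeff_one_pow,
    coeff_one_pow, coeff_one_inv]
  simp only [map_pow, constantCoeff_inv, constantCoeff_E4, constantCoeff_E6, coeff_one_E4,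
    coeff_one_E6]
  norm_num
  ring

theorem constantCoeff_Φ (k : ℕ) : constantCoeff (Φ k) = 1 := by
  rw [← coeff_zero_eq_constantCoeff_apply, Φ, coeff_mk, α]

theorem coeff_one_Φ (k : ℕ) : coeff 1 (Φ k) = (60 * (k : ℚ) ^ 2 - 144) / (k + 1) := by
  rw [Φ, coeff_mk, α]
  simp only [Nat.cast_zero, zero_add, Finset.sum_range_one, Nat.sub_self, α, coeff_one_A]
  ring

theorem coeff_one_inv_of_X_mul_sq_eq_Δ' {S : ℚ⟦X⟧} (hS1 : constantCoeff S = 1)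
    (hS2 : X * S ^ 2 = Δ') : coeff 1 S⁻¹ = 12 := by
  have h := congrArg (coeff 2) hS2
  rw [coeff_two_Δ', coeff_succ_X_mul, coeff_one_pow, hS1] at h
  rw [coeff_one_inv, hS1]
  norm_num at h ⊢
  linarith

noncomputable def B (S : ℚ⟦X⟧) (k : ℕ) (m : ℚ) : ℚ⟦X⟧ :=
  X * Φ (k + 2) + C m * (E6 * S⁻¹ * Φ (k + 1) - Φ k)

theorem constantCoeff_B {S : ℚ⟦X⟧} (hS1 : constantCoeff S = 1) (k : ℕ) (m : ℚ) :
    constantCoeff (B S k m) = 0 := by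
  simp [B, constantCoeff_E6, constantCoeff_Φ, hS1]

theorem coeff_one_B {S : ℚ⟦X⟧} (hS1 : constantCoeff S = 1) (hS2 : X * S ^ 2 = Δ') (k : ℕ)
    (m : ℚ) :
    coeff 1 (B S k m) =
      1 - m * (12 * (6 * k + 5) * (6 * k + 13) / ((k + 1) * (k + 2))) := by
  rw [B, map_add, coeff_succ_X_mul, coeff_zero_eq_constantCoeff_apply, constantCoeff_Φ,
    coeff_C_mul, map_sub, coeff_one_mul, coeff_one_mul, map_mul, coeff_one_E6,
    constantCoeff_E6, coeff_one_inv_of_X_mul_sq_eq_Δ' hS1 hS2, constantCoeff_inv, hS1,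
    coeff_one_Φ, coeff_one_Φ, constantCoeff_Φ]
  push_cast
  field_simp
  ring

/-- for `B = q·Φ_{k+2} + μ·(E₆·S⁻¹·Φ_{k+1} − Φ_k)` the constant coefficient of
`B` vanishes, and the coefficient of `q` in `B` vanishes iff
`μ·12(6k+5)(6k+13) = (k+1)(k+2)`, i.e. iff `μ = (μ*_{k+1})⁻¹`. -/
theorem first_coefficients_of_B (S : PowerSeries ℚ)
    (hS1 : PowerSeries.constantCoeff S = 1)
    (hS2 : PowerSeries.X * S ^ 2 = Δ') (k : ℕ) (m : ℚ) :
    PowerSeries.coeff 0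
        (PowerSeries.X * Φ (k+2) + PowerSeries.C m * (E6 * S⁻¹ * Φ (k+1) - Φ k)) = 0 ∧
    (PowerSeries.coeff 1
        (PowerSeries.X * Φ (k+2) + PowerSeries.C m * (E6 * S⁻¹ * Φ (k+1) - Φ k)) = 0
      ↔ m * (12 * (6*(k:ℚ)+5) * (6*(k:ℚ)+13)) = ((k:ℚ)+1) * ((k:ℚ)+2)) := by
  refine ⟨(coeff_zero_eq_constantCoeff_apply _).trans (constantCoeff_B hS1 k m), ?_⟩
  rw [← B, coeff_one_B hS1 hS2, sub_eq_zero, eq_comm, mul_div_assoc', div_eq_one_iff_eq]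
  positivity
end
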